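/- arXiv:1710.04614 — 7 statements merged into one kernel-verified Lean document; each statement's English description precedes it below -/
import Mathlib

section
/- mono commutes with radicals: mono(√I) = √(mono(I)) for any ideal I ⊆ R. -/
open MvPolynomial

/-- A (monic) monomial in a polynomial ring. -/
def IsMonomial {k : Type*} [Field k] {n : ℕ} (f : MvPolynomial (Fin n) k) : Prop :=
  ∃ s : Fin n →₀ ℕ, f = MvPolynomial.monomial s 1

/-- `mono I` is the largest monomial subideal of `I`: the ideal generated by all
monomials contained in `I`. -/
noncomputable def mono {k : Type*} [Field k] {n : ℕ} (I : Ideal (MvPolynomial (Fin n) k)) :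
    Ideal (MvPolynomial (Fin n) k) :=
  Ideal.span {f | IsMonomial f ∧ f ∈ I}

/-- A monomial ideal is one generated by its monomials. -/
def IsMonomialIdeal {k : Type*} [Field k] {n : ℕ} (I : Ideal (MvPolynomial (Fin n) k)) : Prop :=
  mono I = I

/-- The homogeneous maximal ideal `(x₁, …, xₙ)`. -/
noncomputable def maxIdeal (k : Type*) [Field k] (n : ℕ) : Ideal (MvPolynomial (Fin n) k) :=
  Ideal.span (Set.range MvPolynomial.X)

/-- A graded (homogeneous) ideal. -/
def IsHomogeneousIdeal {k : Type*} [Field k] {n : ℕ}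
    (I : Ideal (MvPolynomial (Fin n) k)) : Prop :=
  ∀ f ∈ I, ∀ i : ℕ, MvPolynomial.homogeneousComponent i f ∈ I


/-!
The ideal `mono I` is spanned by monomials, so it is homogeneous for the grading of
`k[x₁,…,xₙ]` by exponent vectors, whose homogeneous components are the single terms of a
polynomial. Ordering the exponent vectors lexicographically makes this a grading by a linearly
ordered cancellative monoid, and the radical of a homogeneous ideal for such a grading is again
homogeneous. Hence every term of an element of `√(mono I)` lies in `√(mono I) ⊆ √I`; since `k`
is a field, the corresponding monic monomial lies in `√I` as well, i.e. in `mono √I`. The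
inclusion `mono √I ⊆ √(mono I)` holds because powers of monomials are monomials.
-/

attribute [local instance] MvPolynomial.weightedGradedAlgebra

namespace MvPolynomial

variable {σ R : Type*}

noncomputable abbrev lexWeight (σ : Type*) : σ → Lex (σ →₀ ℕ) :=
  fun i => toLex (Finsupp.single i 1)

theorem weight_lexWeight (d : σ →₀ ℕ) : Finsupp.weight (lexWeight σ) d = toLex d := by
  induction d using Finsupp.induction with
  | zero => simp
  | single_add i r d _ _ ih =>
    rw [map_add, ih, Finsupp.weight_single, toLex_add]
    exact congrArg (· + toLex d) (congrArg toLex (Finsupp.smul_single_one _ _))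

theorem isHomogeneous_radical [CommRing R] [LinearOrder σ] {I : Ideal (MvPolynomial σ R)}
    (hI : I.IsHomogeneous (weightedHomogeneousSubmodule R (lexWeight σ))) :
    I.radical.IsHomogeneous (weightedHomogeneousSubmodule R (lexWeight σ)) := by
  -- `Ideal.IsHomogeneous.radical` uses the `DecidableEq` instance of the linear order on
  -- `Lex (σ →₀ ℕ)`, which is not the one coming from `Finsupp`.
  convert Ideal.IsHomogeneous.radical (𝒜 := weightedHomogeneousSubmodule R (lexWeight σ))
    (I := I) ?_ using 2
  all_goals try rfl
  convert hI using 2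
  all_goals rfl

variable [CommSemiring R] [DecidableEq σ]

theorem weightedHomogeneousComponent_lexWeight (d : σ →₀ ℕ) (p : MvPolynomial σ R) :
    weightedHomogeneousComponent (lexWeight σ) (toLex d) p = monomial d (coeff d p) := by
  ext e
  rw [coeff_weightedHomogeneousComponent, weight_lexWeight, coeff_monomial]
  by_cases h : e = d
  · simp [h]
  · simp [h, Ne.symm h]

theorem monomial_coeff_mem_of_isHomogeneous {I : Ideal (MvPolynomial σ R)}
    (hI : I.IsHomogeneous (weightedHomogeneousSubmodule R (lexWeight σ)))
    {p : MvPolynomial σ R} (hp : p ∈ I) (d : σ →₀ ℕ) : monomial d (coeff d p) ∈ I := by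
  rw [← weightedHomogeneousComponent_lexWeight]
  exact weightedHomogeneousComponent_mem_of_mem R _ hI hp _

theorem isHomogeneous_span_monomials {S : Set (MvPolynomial σ R)}
    (hS : ∀ f ∈ S, ∃ d c, f = monomial d c) :
    (Ideal.span S).IsHomogeneous (weightedHomogeneousSubmodule R (lexWeight σ)) := by
  refine Ideal.homogeneous_span _ _ fun f hf => ?_
  obtain ⟨d, c, rfl⟩ := hS f hf
  exact ⟨toLex d, isWeightedHomogeneous_monomial _ _ _ (weight_lexWeight d)⟩

end MvPolynomial

section Mono

variable {k : Type*} [Field k] {n : ℕ}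

theorem mono_le (I : Ideal (MvPolynomial (Fin n) k)) : mono I ≤ I :=
  Ideal.span_le.2 fun _ hf => hf.2

theorem monomial_mem_mono_of_mem {I : Ideal (MvPolynomial (Fin n) k)} {d : Fin n →₀ ℕ} {c : k}
    (h : monomial d c ∈ I) : monomial d c ∈ mono I := by
  rcases eq_or_ne c 0 with rfl | hc
  · rw [monomial_zero]
    exact zero_mem _
  have hmonic : monomial d 1 ∈ I := by
    simpa [C_mul_monomial, hc] using I.mul_mem_left (C c⁻¹) h
  simpa [C_mul_monomial] using (mono I).mul_mem_left (C c) (Ideal.subset_span ⟨⟨d, rfl⟩, hmonic⟩)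

theorem mem_mono_of_forall_monomial_coeff_mem {I : Ideal (MvPolynomial (Fin n) k)}
    {p : MvPolynomial (Fin n) k} (h : ∀ d, monomial d (coeff d p) ∈ I) : p ∈ mono I := by
  rw [p.as_sum]
  exact Ideal.sum_mem _ fun d _ => monomial_mem_mono_of_mem (h d)

theorem mono_isHomogeneous (I : Ideal (MvPolynomial (Fin n) k)) :
    (mono I).IsHomogeneous (weightedHomogeneousSubmodule k (lexWeight (Fin n))) :=
  isHomogeneous_span_monomials fun _ ⟨⟨d, hd⟩, _⟩ => ⟨d, 1, hd⟩

theorem mono_radical_le (I : Ideal (MvPolynomial (Fin n) k)) :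
    mono I.radical ≤ (mono I).radical := by
  refine Ideal.span_le.2 ?_
  rintro _ ⟨⟨d, rfl⟩, m, hm⟩
  refine ⟨m, ?_⟩
  rw [monomial_pow] at hm ⊢
  exact monomial_mem_mono_of_mem hm

end Mono

theorem mono_radical {k : Type*} [Field k] {n : ℕ}
    (I : Ideal (MvPolynomial (Fin n) k)) :
    mono I.radical = (mono I).radical := by
  refine le_antisymm (mono_radical_le I) fun p hp => ?_
  have hrad := isHomogeneous_radical (mono_isHomogeneous I)
  exact mem_mono_of_forall_monomial_coeff_mem fun d =>
    Ideal.radical_mono (mono_le I) (monomial_coeff_mem_of_isHomogeneous hrad hp d)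
end

section
/- If I is a prime ideal of R, then mono(I) is prime (or the unit ideal case excluded: mono(I) is a prime ideal since mono(I) ⊆ I ≠ R). -/
open MvPolynomial

/-!
A monomial lies in a prime ideal only if one of its variables does, so for `I` prime, `mono I` is
the ideal spanned by the variables lying in `I`. An ideal spanned by variables is the kernel of the
substitution sending those variables to `0`, a map into a domain, hence it is prime.
-/

namespace MvPolynomial

variable {σ R : Type*}

section CommRing

variable [CommRing R]

noncomputable def killVars (s : Set σ) : MvPolynomial σ R →ₐ[R] MvPolynomial σ R :=
  open Classical in aeval fun i => if i ∈ s then 0 else X i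

theorem ker_killVars (s : Set σ) :
    RingHom.ker (killVars (R := R) s) = Ideal.span (X '' s : Set (MvPolynomial σ R)) := by
  set J : Ideal (MvPolynomial σ R) := Ideal.span (X '' s)
  refine le_antisymm ?_ ?_
  · -- `killVars s` does not change classes modulo `J`, so it only kills elements of `J`.
    have hmk : (Ideal.Quotient.mkₐ R J).comp (killVars s) = Ideal.Quotient.mkₐ R J := by
      refine algHom_ext fun i => ?_
      by_cases hi : i ∈ s
      · have hXi : X i ∈ J := Ideal.subset_span (Set.mem_image_of_mem X hi)
        simpa [killVars, hi, eq_comm (a := (0 : _ ⧸ J)), Ideal.Quotient.eq_zero_iff_mem] using hXi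
      · simp [killVars, hi]
    intro f hf
    rw [← Ideal.Quotient.eq_zero_iff_mem, ← Ideal.Quotient.mkₐ_eq_mk R, ← hmk,
      AlgHom.comp_apply, RingHom.mem_ker.mp hf, map_zero]
  · rw [Ideal.span_le]
    rintro _ ⟨i, hi, rfl⟩
    simp [killVars, hi]

theorem isPrime_span_X_image [IsDomain R] (s : Set σ) :
    (Ideal.span (X '' s : Set (MvPolynomial σ R))).IsPrime :=
  ker_killVars (R := R) s ▸ RingHom.ker_isPrime _

end CommRing

theorem exists_X_mem_of_monomial_mem [CommSemiring R] {P : Ideal (MvPolynomial σ R)}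
    (hP : P.IsPrime) {s : σ →₀ ℕ} (hs : monomial s 1 ∈ P) : ∃ i, s i ≠ 0 ∧ X i ∈ P := by
  rw [monomial_eq, C_1, one_mul, Finsupp.prod, hP.prod_mem_iff] at hs
  obtain ⟨i, hi, hXi⟩ := hs
  exact ⟨i, Finsupp.mem_support_iff.mp hi, hP.mem_of_pow_mem _ hXi⟩

end MvPolynomial

theorem mono_eq_span_X {k : Type*} [Field k] {n : ℕ} {I : Ideal (MvPolynomial (Fin n) k)}
    (hI : I.IsPrime) : mono I = Ideal.span (X '' {i | X i ∈ I}) := by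
  refine le_antisymm ?_ ?_
  · rw [mono, Ideal.span_le]
    rintro _ ⟨⟨s, rfl⟩, hs⟩
    obtain ⟨i, hsi, hXi⟩ := exists_X_mem_of_monomial_mem hI hs
    rw [SetLike.mem_coe, mem_ideal_span_X_image]
    intro m hm
    rw [Finset.mem_singleton.mp (support_monomial_subset hm)]
    exact ⟨i, hXi, hsi⟩
  · rw [Ideal.span_le]
    rintro _ ⟨i, hi, rfl⟩
    exact Ideal.subset_span ⟨⟨Finsupp.single i 1, rfl⟩, hi⟩

theorem mono_isPrime {k : Type*} [Field k] {n : ℕ}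
    (I : Ideal (MvPolynomial (Fin n) k)) (hI : I.IsPrime) :
    (mono I).IsPrime :=
  mono_eq_span_X hI ▸ isPrime_span_X_image _
end

section
/- Every associated prime of R/mono(I) is of the form mono(P) for some associated prime P of R/I; i.e., Ass(R/mono(I)) ⊆ { mono(P) : P ∈ Ass(R/I) }. -/
open MvPolynomial

/-!
Intersecting a primary decomposition `I = Q₁ ∩ ⋯ ∩ Q_r` with the monomials gives
`mono I = mono Q₁ ∩ ⋯ ∩ mono Q_r`. Each `mono Qᵢ` is primary with radical `mono √Qᵢ`, so every
associated prime of `R/mono I` is some `mono √Qᵢ`, and `√Qᵢ` is associated to `R/I`.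

Both facts about `mono Q` rest on leading terms for a monomial order: a nonzero polynomial of
`mono J` has its leading monomial in `J`, leading monomials multiply, and subtracting from `f`
its terms whose monomials lie in `J` changes `f` only by an element of `mono J`.
-/

namespace Submodule

section CommSemiring

variable {R M : Type*} [CommSemiring R] [AddCommMonoid M] [Module R M]

theorem associatedPrimes_finsetInf_subset {ι : Type*} {s : Finset ι} {N : ι → Submodule R M}
    (hN : ∀ i ∈ s, (N i).IsPrimary) :
    (s.inf N).associatedPrimes ⊆ (fun i ↦ ((N i).colon Set.univ).radical) '' s := by
  classical
  rintro p ⟨hp, x, rfl⟩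
  have hcolon : ((s.inf N).colon {x}).radical =
      (s.filter (x ∉ N ·)).inf fun i ↦ ((N i).colon Set.univ).radical := by
    simp_rw [colon_finsetInf, ← Ideal.radicalInfTopHom_apply, map_finset_inf, Function.comp_def,
      Ideal.radicalInfTopHom_apply]
    rw [Finset.inf_congr rfl (fun i hi ↦ (hN i hi).radical_colon_singleton_eq_ite x),
      Finset.inf_ite, Finset.inf_top, top_inf_eq]
  rw [hcolon] at hp ⊢
  obtain ⟨i, hi, hpi⟩ := Ideal.eq_inf_of_isPrime_inf hp
  exact ⟨i, (Finset.mem_filter.1 hi).1, hpi⟩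

end CommSemiring

variable {R M : Type*} [CommRing R] [AddCommGroup M] [Module R M]

theorem colon_bot_singleton_mkQ (N : Submodule R M) (x : M) :
    (⊥ : Submodule R (M ⧸ N)).colon {N.mkQ x} = N.colon {x} := by
  ext r
  rw [mem_colon_singleton, mem_colon_singleton, mem_bot, mkQ_apply, ← Quotient.mk_smul,
    Quotient.mk_eq_zero]

theorem associatedPrimes_quotient (N : Submodule R M) :
    associatedPrimes R (M ⧸ N) = N.associatedPrimes := by
  ext p
  simp only [AssociatedPrimes.mem_iff, IsAssociatedPrime, AssociatePrimes.mem_iff,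
    Submodule.isAssociatedPrime_def, N.mkQ_surjective.exists, colon_bot_singleton_mkQ]

end Submodule

theorem Ideal.mul_sub_pow_mem {S : Type*} [CommRing S] {J : Ideal S} {f g h : S} {e : ℕ}
    (hfg : f * g ∈ J) (hh : h ^ e ∈ J) : f * (g - h) ^ e ∈ J := by
  obtain ⟨c, hc⟩ := sub_dvd_pow_sub_pow (g - h) (-h) e
  rw [sub_neg_eq_add, sub_add_cancel] at hc
  have hsplit : f * (g - h) ^ e = f * g * c + f * (-1) ^ e * h ^ e := by
    rw [mul_assoc f g, ← hc, neg_pow]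
    ring
  rw [hsplit]
  exact J.add_mem (J.mul_mem_right c hfg) (J.mul_mem_left _ hh)

section Mono

variable {k : Type*} [Field k] {n : ℕ}

local notation "R" => MvPolynomial (Fin n) k

theorem mono_eq_span_monomial (I : Ideal R) :
    mono I = Ideal.span ((fun s ↦ monomial s (1 : k)) '' {s | monomial s 1 ∈ I}) := by
  unfold mono IsMonomial
  congr 1
  ext f
  constructor
  · rintro ⟨⟨s, rfl⟩, hs⟩
    exact ⟨s, hs, rfl⟩
  · rintro ⟨s, hs, rfl⟩
    exact ⟨⟨s, rfl⟩, hs⟩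

theorem mem_mono_iff {I : Ideal R} {f : R} :
    f ∈ mono I ↔ ∀ s ∈ f.support, monomial s 1 ∈ I := by
  rw [mono_eq_span_monomial, mem_ideal_span_monomial_image]
  refine forall₂_congr fun s _ ↦ ⟨?_, fun hs ↦ ⟨s, hs, le_rfl⟩⟩
  rintro ⟨t, ht, hts⟩
  rw [← add_tsub_cancel_of_le hts, ← mul_one (1 : k), ← monomial_mul]
  exact I.mul_mem_right _ ht

theorem mono_le_s7 (I : Ideal R) : mono I ≤ I :=
  Ideal.span_le.2 fun _ h ↦ h.2

theorem mono_finsetInf {ι : Type*} (s : Finset ι) (I : ι → Ideal R) :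
    mono (s.inf I) = s.inf fun i ↦ mono (I i) := by
  ext f
  simp only [mem_mono_iff, Submodule.mem_finsetInf]
  exact forall₂_comm

theorem monomial_mem_mono {I : Ideal R} {s : Fin n →₀ ℕ} (c : k) (hs : monomial s 1 ∈ I) :
    monomial s c ∈ mono I :=
  mem_mono_iff.2 fun _ ht ↦ Finset.mem_singleton.1 (support_monomial_subset ht) ▸ hs

theorem exists_sub_mem_mono_and_monomials_notMem (I : Ideal R) (f : R) :
    ∃ g : R, f - g ∈ mono I ∧ ∀ s ∈ g.support, monomial s 1 ∉ I := by
  classical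
  have hsplit : f = (∑ s ∈ f.support with monomial s 1 ∈ I, monomial s (coeff s f)) +
      ∑ s ∈ f.support with monomial s 1 ∉ I, monomial s (coeff s f) := by
    rw [Finset.sum_filter_add_sum_filter_not]
    exact f.as_sum
  refine ⟨∑ s ∈ f.support with monomial s 1 ∉ I, monomial s (coeff s f), ?_, fun s hs ↦ ?_⟩
  · rw [sub_eq_of_eq_add hsplit]
    exact Ideal.sum_mem _ fun s hs ↦ monomial_mem_mono _ (Finset.mem_filter.1 hs).2
  · obtain ⟨t, ht, hst⟩ := Finset.mem_biUnion.1 (support_sum hs)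
    rw [Finset.mem_singleton.1 (support_monomial_subset hst)]
    exact (Finset.mem_filter.1 ht).2

theorem monomial_degree_mem_of_mem_mono (m : MonomialOrder (Fin n)) {I : Ideal R} {f : R}
    (hf : f ∈ mono I) (hf0 : f ≠ 0) : monomial (m.degree f) 1 ∈ I :=
  mem_mono_iff.1 hf _ (m.degree_mem_support hf0)

theorem monomial_degree_mem_radical_of_pow (m : MonomialOrder (Fin n)) {I : Ideal R} {f : R}
    {e : ℕ} (h : monomial (m.degree (f ^ e)) 1 ∈ I.radical) :
    monomial (m.degree f) 1 ∈ I.radical := by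
  rw [m.degree_pow, ← one_pow e, ← monomial_pow] at h
  exact Ideal.mem_radical_of_pow_mem h

theorem mono_radical_le_radical_mono (I : Ideal R) : mono I.radical ≤ (mono I).radical := by
  rw [mono, Ideal.span_le]
  rintro _ ⟨⟨s, rfl⟩, e, he⟩
  rw [monomial_pow, one_pow] at he
  exact ⟨e, by rw [monomial_pow, one_pow]; exact monomial_mem_mono 1 he⟩

theorem radical_mono_eq_mono_radical (I : Ideal R) : (mono I).radical = mono I.radical := by
  refine le_antisymm (fun f hf ↦ ?_) (mono_radical_le_radical_mono I)
  obtain ⟨g, hfg, hg⟩ := exists_sub_mem_mono_and_monomials_notMem I.radical f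
  suffices g = 0 by simpa [this] using hfg
  by_contra hg0
  obtain ⟨e, he⟩ : g ∈ (mono I).radical := by
    simpa using sub_mem hf (mono_radical_le_radical_mono I hfg)
  refine hg _ (MonomialOrder.lex.degree_mem_support hg0)
    (monomial_degree_mem_radical_of_pow MonomialOrder.lex (e := e) (Ideal.le_radical ?_))
  exact monomial_degree_mem_of_mem_mono _ he (pow_ne_zero e hg0)

theorem monomial_degree_mem_radical_of_mul_mem_mono (m : MonomialOrder (Fin n)) {Q : Ideal R}
    (hQ : Q.IsPrimary) {f g : R} (hfg : f * g ∈ mono Q) (hf : f ∉ mono Q) (hg : g ≠ 0) :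
    monomial (m.degree g) 1 ∈ Q.radical := by
  obtain ⟨f', hff', hf'⟩ := exists_sub_mem_mono_and_monomials_notMem Q f
  have hf'0 : f' ≠ 0 := by
    rintro rfl
    exact hf (by simpa using hff')
  have hf'g : f' * g ∈ mono Q := by
    simpa [sub_mul] using sub_mem hfg ((mono Q).mul_mem_right g hff')
  have hlead := monomial_degree_mem_of_mem_mono m hf'g (mul_ne_zero hf'0 hg)
  rw [m.degree_mul hf'0 hg, ← mul_one (1 : k), ← monomial_mul] at hlead
  exact ((Ideal.isPrimary_iff.1 hQ).2 hlead).resolve_left (hf' _ (m.degree_mem_support hf'0))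

theorem isPrimary_mono {Q : Ideal R} (hQ : Q.IsPrimary) : (mono Q).IsPrimary := by
  refine Ideal.isPrimary_iff.2 ⟨fun h ↦ hQ.ne_top (top_le_iff.1 (h ▸ mono_le_s7 Q)),
    fun {f g} hfg ↦ or_iff_not_imp_left.2 fun hf ↦ ?_⟩
  rw [radical_mono_eq_mono_radical]
  obtain ⟨g', hgg', hg'⟩ := exists_sub_mem_mono_and_monomials_notMem Q.radical g
  suffices g' = 0 by simpa [this] using hgg'
  by_contra hg'0
  obtain ⟨e, he⟩ : g - g' ∈ (mono Q).radical := radical_mono_eq_mono_radical Q ▸ hgg'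
  have hcofactor := Ideal.mul_sub_pow_mem hfg he
  rw [sub_sub_cancel] at hcofactor
  refine hg' _ (MonomialOrder.lex.degree_mem_support hg'0)
    (monomial_degree_mem_radical_of_pow MonomialOrder.lex (e := e) ?_)
  exact monomial_degree_mem_radical_of_mul_mem_mono _ hQ hcofactor hf (pow_ne_zero e hg'0)

end Mono

theorem associatedPrimes_mono_subset_general {k : Type*} [Field k] {n : ℕ}
    (I : Ideal (MvPolynomial (Fin n) k)) :
    ∀ P ∈ associatedPrimes (MvPolynomial (Fin n) k) (MvPolynomial (Fin n) k ⧸ mono I),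
      ∃ Q ∈ associatedPrimes (MvPolynomial (Fin n) k) (MvPolynomial (Fin n) k ⧸ I),
        P = mono Q := by
  obtain ⟨t, ht⟩ :=
    Submodule.IsLasker.exists_isMinimalPrimaryDecomposition (Submodule.isLasker _ _) I
  have hmono : mono I = t.inf mono := by rw [← ht.inf_eq, mono_finsetInf]; rfl
  simp only [Submodule.associatedPrimes_quotient, hmono]
  intro P hP
  obtain ⟨Q, hQt, rfl⟩ :=
    Submodule.associatedPrimes_finsetInf_subset (fun Q hQ ↦ isPrimary_mono (ht.primary hQ)) hP
  refine ⟨Ideal.radical Q, ?_, ?_⟩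
  · simpa using ht.mem_associatedPrimes hQt
  · simp [radical_mono_eq_mono_radical]

theorem associatedPrimes_mono_subset {k : Type*} [Field k] {n : ℕ}
    (I : Ideal (MvPolynomial (Fin n) k)) (hI : I ≠ ⊤) :
    ∀ P ∈ associatedPrimes (MvPolynomial (Fin n) k) (MvPolynomial (Fin n) k ⧸ mono I),
      ∃ Q ∈ associatedPrimes (MvPolynomial (Fin n) k) (MvPolynomial (Fin n) k ⧸ I),
        P = mono Q :=
  associatedPrimes_mono_subset_general I
end

section
/- For a graded Artinian ideal I ⊆ R, if the socle of R/mono(I) is nonzero in degree j, then the socle of R/I is nonzero in degree j. (Equivalently β_{n,j}(R/mono(I)) ≠ 0 implies β_{n,j}(R/I) ≠ 0.) -/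
open MvPolynomial

/-! An ideal spanned by monomials contains a polynomial iff it contains each of its monomials.
So a degree-`j` socle element `f` of `R ⧸ mono I` has a monomial `m ∉ I`; each `xᵢ m`
is a monomial of `xᵢ f ∈ mono I`, so it lies in `I`. -/

namespace MvPolynomial

variable {σ R : Type*} [CommSemiring R]

theorem IsHomogeneous.monomial_one_of_mem_support {f : MvPolynomial σ R} {j : ℕ}
    (hf : f.IsHomogeneous j) {s : σ →₀ ℕ} (hs : s ∈ f.support) :
    (monomial s (1 : R)).IsHomogeneous j :=
  isHomogeneous_monomial 1 <| by rw [Finsupp.degree_eq_weight_one]; exact hf (mem_support_iff.1 hs)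

theorem mem_span_monomials_mem_iff [Nontrivial R] {I : Ideal (MvPolynomial σ R)}
    {p : MvPolynomial σ R} :
    p ∈ Ideal.span ((fun s => monomial s (1 : R)) '' {s | monomial s 1 ∈ I}) ↔
      ∀ s ∈ p.support, monomial s 1 ∈ I := by
  refine mem_ideal_span_monomial_image.trans (forall₂_congr fun s _ => ?_)
  exact ⟨fun ⟨t, ht, hts⟩ => Ideal.mem_of_dvd _ (monomial_one_dvd_monomial_one.2 hts) ht,
    fun hs => ⟨s, hs, le_rfl⟩⟩

end MvPolynomial

section Mono

variable {k : Type*} [Field k] {n : ℕ} {I : Ideal (MvPolynomial (Fin n) k)}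

theorem mono_eq_span_monomials_mem :
    mono I = Ideal.span ((fun s => monomial s (1 : k)) '' {s | monomial s 1 ∈ I}) := by
  unfold mono IsMonomial
  congr 1
  ext f
  constructor
  · rintro ⟨⟨s, rfl⟩, hs⟩
    exact ⟨s, hs, rfl⟩
  · rintro ⟨s, hs, rfl⟩
    exact ⟨⟨s, rfl⟩, hs⟩

theorem mem_mono_iff_s13 {p : MvPolynomial (Fin n) k} :
    p ∈ mono I ↔ ∀ s ∈ p.support, monomial s 1 ∈ I := by
  rw [mono_eq_span_monomials_mem, mem_span_monomials_mem_iff]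

end Mono

theorem socle_mono_nonzero_general {k : Type*} [Field k] {n : ℕ}
    (I : Ideal (MvPolynomial (Fin n) k)) (j : ℕ)
    (h : ∃ f : MvPolynomial (Fin n) k, f.IsHomogeneous j ∧ f ∉ mono I ∧
          ∀ i : Fin n, MvPolynomial.X i * f ∈ mono I) :
    ∃ f : MvPolynomial (Fin n) k, f.IsHomogeneous j ∧ f ∉ I ∧
      ∀ i : Fin n, MvPolynomial.X i * f ∈ I := by
  obtain ⟨f, hf, hfm, hmul⟩ := h
  obtain ⟨s, hs, hsI⟩ : ∃ s ∈ f.support, monomial s 1 ∉ I := by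
    simpa [mem_mono_iff_s13] using hfm
  refine ⟨monomial s 1, hf.monomial_one_of_mem_support hs, hsI, fun i => ?_⟩
  have hsupp : Finsupp.single i 1 + s ∈ (X i * f).support := by
    rw [mem_support_iff, coeff_X_mul]
    exact mem_support_iff.1 hs
  rw [X, monomial_mul, one_mul]
  exact mem_mono_iff_s13.1 (hmul i) _ hsupp

theorem socle_mono_nonzero {k : Type*} [Field k] {n : ℕ}
    (I : Ideal (MvPolynomial (Fin n) k)) (hgr : IsHomogeneousIdeal I)
    (hart : ∃ s : ℕ, (maxIdeal k n) ^ s ≤ I) (j : ℕ)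
    (h : ∃ f : MvPolynomial (Fin n) k, f.IsHomogeneous j ∧ f ∉ mono I ∧
          ∀ i : Fin n, MvPolynomial.X i * f ∈ mono I) :
    ∃ f : MvPolynomial (Fin n) k, f.IsHomogeneous j ∧ f ∉ I ∧
      ∀ i : Fin n, MvPolynomial.X i * f ∈ I :=
  socle_mono_nonzero_general I j h
end

section
/- Let M be a monomial ideal and u₁ ≠ u₂ monomials not in M. Then mono(M + (u₁ + u₂)) = M if and only if M : u₁ = M : u₂. -/
open MvPolynomial

/-! If `mono (M + (u₁ + u₂)) = M` and `x^σ u₁ ∈ M`, then `x^σ u₂ = x^σ (u₁ + u₂) - x^σ u₁` is a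
monomial of `M + (u₁ + u₂)`, hence lies in `M`.

Conversely, `M : u₁ = M : u₂` says that `x^σ u₁ ∉ M` exactly when `x^σ u₂ ∉ M`. Suppose a
monomial `w ∉ M` is written `w = f + g (u₁ + u₂)` with `f ∈ M`, and split `g = g₁ + g₂` according
to whether `x^σ u₁ ∉ M`. Then `g₂ (u₁ + u₂) ∈ M`, while `w - g₁ (u₁ + u₂)` is supported on
monomials outside `M`; as it also lies in the monomial ideal `M`, it vanishes. So the binomial
`u₁ + u₂` divides the monomial `w`, which is impossible. -/

namespace MvPolynomial

variable {σ R : Type*}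

theorem restrictSupport_sup_restrictSupport_compl [CommSemiring R] (s : Set (σ →₀ ℕ)) :
    restrictSupport R s ⊔ restrictSupport R sᶜ = ⊤ := by
  rw [restrictSupport_eq_span, restrictSupport_eq_span, ← Submodule.span_union, ← Set.image_union,
    Set.union_compl_self, ← restrictSupport_eq_span, restrictSupport_univ]

theorem monomial_add_monomial_not_dvd_monomial [CommRing R] [NoZeroDivisors R] [Nontrivial R]
    {s₁ s₂ : σ →₀ ℕ} (hs : s₁ ≠ s₂) (τ : σ →₀ ℕ) :
    ¬monomial s₁ (1 : R) + monomial s₂ 1 ∣ monomial τ 1 := by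
  classical
  rw [dvd_monomial_one_iff_exists]
  rintro ⟨m, u, -, -, h⟩
  have h₁ := congr_arg (coeff s₁) h
  have h₂ := congr_arg (coeff s₂) h
  simp only [coeff_add, coeff_monomial, if_neg hs, if_neg hs.symm] at h₁ h₂
  split_ifs at h₁ h₂ <;> simp_all

end MvPolynomial

section MonomialIdeal

variable {k : Type*} [Field k] {n : ℕ}

theorem mono_monotone : Monotone (mono (k := k) (n := n)) :=
  fun _ _ h => Ideal.span_mono fun _ ⟨hf, hfI⟩ => ⟨hf, h hfI⟩

theorem mono_eq_span_monomial_image (I : Ideal (MvPolynomial (Fin n) k)) :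
    mono I = Ideal.span ((monomial · (1 : k)) '' {s | monomial s 1 ∈ I}) := by
  refine congrArg Ideal.span (Set.ext fun f => ⟨?_, ?_⟩)
  · rintro ⟨⟨s, rfl⟩, hf⟩
    exact ⟨s, hf, rfl⟩
  · rintro ⟨s, hs, rfl⟩
    exact ⟨⟨s, rfl⟩, hs⟩

theorem monomial_add_mem_of_mono_sup_span_eq {M : Ideal (MvPolynomial (Fin n) k)}
    {s₁ s₂ : Fin n →₀ ℕ} (h : mono (M + Ideal.span {monomial s₁ (1 : k) + monomial s₂ 1}) = M)
    {σ : Fin n →₀ ℕ} (h₁ : monomial (σ + s₁) (1 : k) ∈ M) : monomial (σ + s₂) (1 : k) ∈ M := by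
  have hsub : monomial (σ + s₂) (1 : k) =
      monomial σ 1 * (monomial s₁ 1 + monomial s₂ 1) - monomial (σ + s₁) 1 := by
    simp [mul_add, monomial_mul]
  rw [← h]
  refine Ideal.subset_span ⟨⟨_, rfl⟩, hsub ▸ sub_mem ?_ (Submodule.mem_sup_left h₁)⟩
  exact Submodule.mem_sup_right (Ideal.mul_mem_left _ _ (Ideal.mem_span_singleton_self _))

namespace IsMonomialIdeal

variable {M : Ideal (MvPolynomial (Fin n) k)}

theorem mem_iff (hM : IsMonomialIdeal M) {p : MvPolynomial (Fin n) k} :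
    p ∈ M ↔ ∀ s ∈ p.support, monomial s (1 : k) ∈ M := by
  conv_lhs => rw [← hM, mono_eq_span_monomial_image, mem_ideal_span_monomial_image]
  refine forall₂_congr fun s _ => ⟨?_, fun hs => ⟨s, hs, le_rfl⟩⟩
  rintro ⟨t, ht, hts⟩
  exact Ideal.mem_of_dvd _ (monomial_one_dvd_monomial_one.mpr hts) ht

theorem mul_monomial_mem_iff (hM : IsMonomialIdeal M) {p : MvPolynomial (Fin n) k}
    {s : Fin n →₀ ℕ} :
    p * monomial s 1 ∈ M ↔ ∀ σ ∈ p.support, monomial (σ + s) (1 : k) ∈ M := by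
  have hsupp : (p * monomial s 1).support = p.support.map (addRightEmbedding s) :=
    AddMonoidAlgebra.support_coeff_mul_single p 1 (by simp) s
  rw [hM.mem_iff, hsupp, Finset.forall_mem_map]
  rfl

theorem eq_zero_of_mem_restrictSupport (hM : IsMonomialIdeal M) {p : MvPolynomial (Fin n) k}
    (hpM : p ∈ M) (hp : p ∈ restrictSupport k {s | monomial s (1 : k) ∉ M}) : p = 0 := by
  rw [← support_eq_empty, Finset.eq_empty_iff_forall_notMem]
  exact fun s hs => hp hs (hM.mem_iff.mp hpM s hs)

theorem colon_monomial_eq_iff (hM : IsMonomialIdeal M) {s₁ s₂ : Fin n →₀ ℕ} :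
    M.colon (Ideal.span {monomial s₁ (1 : k)}) = M.colon (Ideal.span {monomial s₂ (1 : k)}) ↔
      ∀ σ, monomial (σ + s₁) (1 : k) ∈ M ↔ monomial (σ + s₂) (1 : k) ∈ M := by
  simp only [SetLike.ext_iff, Ideal.mem_colon_span_singleton, hM.mul_monomial_mem_iff]
  refine ⟨fun h σ => ?_, fun h p => forall₂_congr fun σ _ => h σ⟩
  simpa [support_monomial] using h (monomial σ 1)

theorem monomial_mem_of_mem_sup_span_binomial (hM : IsMonomialIdeal M) {s₁ s₂ : Fin n →₀ ℕ}
    (hs : s₁ ≠ s₂) (hcolon : ∀ σ, monomial (σ + s₁) (1 : k) ∈ M ↔ monomial (σ + s₂) (1 : k) ∈ M)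
    {τ : Fin n →₀ ℕ} (hτ : monomial τ (1 : k) ∈ M + Ideal.span {monomial s₁ 1 + monomial s₂ 1}) :
    monomial τ (1 : k) ∈ M := by
  set b : MvPolynomial (Fin n) k := monomial s₁ 1 + monomial s₂ 1
  set S : Set (Fin n →₀ ℕ) := {ρ | monomial ρ (1 : k) ∉ M}
  by_contra hτS
  obtain ⟨f, hf, _, hgb, hfg⟩ := Submodule.mem_sup.mp hτ
  obtain ⟨g, rfl⟩ := Ideal.mem_span_singleton'.mp hgb
  obtain ⟨g₁, hg₁, g₂, hg₂, rfl⟩ := Submodule.mem_sup.mp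
    ((restrictSupport_sup_restrictSupport_compl {σ | σ + s₁ ∈ S}).ge (Submodule.mem_top (x := g)))
  have hg₂b : g₂ * b ∈ M := by
    rw [mul_add]
    exact add_mem (hM.mul_monomial_mem_iff.mpr fun σ hσ => not_not.mp (hg₂ hσ))
      (hM.mul_monomial_mem_iff.mpr fun σ hσ => (hcolon σ).mp (not_not.mp (hg₂ hσ)))
  have hg₁b : g₁ * b ∈ restrictSupport k S := by
    have hb : b ∈ restrictSupport k {s₁, s₂} := add_mem (by simp) (by simp)
    have hprod := (restrictSupport_add k _ _).ge (Submodule.mul_mem_mul hg₁ hb)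
    refine restrictSupport_mono k ?_ hprod
    rintro _ ⟨σ, hσ, s, hs, rfl⟩
    rcases hs with rfl | rfl
    · exact hσ
    · exact fun h => hσ ((hcolon σ).mpr h)
  have hzero : monomial τ 1 - g₁ * b = 0 := by
    refine hM.eq_zero_of_mem_restrictSupport ?_ (sub_mem (by simpa [S] using hτS) hg₁b)
    have hrest : f + (g₁ + g₂) * b - g₁ * b = f + g₂ * b := by ring
    rw [← hfg, hrest]
    exact add_mem hf hg₂b
  exact monomial_add_monomial_not_dvd_monomial hs τ ⟨g₁, by linear_combination hzero⟩

end IsMonomialIdeal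

end MonomialIdeal

theorem mono_add_binomial_eq_iff_general {k : Type*} [Field k] {n : ℕ}
    (M : Ideal (MvPolynomial (Fin n) k)) (hM : IsMonomialIdeal M)
    (u₁ u₂ : MvPolynomial (Fin n) k) (h₁ : IsMonomial u₁) (h₂ : IsMonomial u₂)
    (hne : u₁ ≠ u₂) :
    mono (M + Ideal.span {u₁ + u₂}) = M ↔
      Submodule.colon M (Ideal.span {u₁}) = Submodule.colon M (Ideal.span {u₂}) := by
  obtain ⟨s₁, rfl⟩ := h₁
  obtain ⟨s₂, rfl⟩ := h₂
  have hs : s₁ ≠ s₂ := fun h => hne (h ▸ rfl)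
  rw [hM.colon_monomial_eq_iff]
  constructor
  · intro h σ
    exact ⟨monomial_add_mem_of_mono_sup_span_eq h,
      monomial_add_mem_of_mono_sup_span_eq ((add_comm (monomial s₁ (1 : k)) _) ▸ h)⟩
  · intro hcolon
    refine le_antisymm ?_ (hM.ge.trans (mono_monotone le_sup_left))
    rw [mono, Ideal.span_le]
    rintro _ ⟨⟨τ, rfl⟩, hτ⟩
    exact hM.monomial_mem_of_mem_sup_span_binomial hs hcolon hτ

theorem mono_add_binomial_eq_iff {k : Type*} [Field k] {n : ℕ}
    (M : Ideal (MvPolynomial (Fin n) k)) (hM : IsMonomialIdeal M)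
    (u₁ u₂ : MvPolynomial (Fin n) k) (h₁ : IsMonomial u₁) (h₂ : IsMonomial u₂)
    (hne : u₁ ≠ u₂) (hu₁ : u₁ ∉ M) (hu₂ : u₂ ∉ M) :
    mono (M + Ideal.span {u₁ + u₂}) = M ↔
      Submodule.colon M (Ideal.span {u₁}) = Submodule.colon M (Ideal.span {u₂}) :=
  mono_add_binomial_eq_iff_general M hM u₁ u₂ h₁ h₂ hne
end

section
/- Let b ∈ ℕⁿ and M = (x₁^{b₁}, …, xₙ^{bₙ}). Then there do not exist distinct monomials u₁ ≠ u₂ with u₁, u₂ ∉ M and M : u₁ = M : u₂. Consequently, if I is a graded Artinian ideal with mono(I) Gorenstein (equivalently of the form (x₁^{b₁},…,xₙ^{bₙ})), then I = mono(I) = (x₁^{b₁},…,xₙ^{bₙ}). -/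
open MvPolynomial

/-!
Write `M = (x₁^{b₁}, …, xₙ^{bₙ})`; a monomial `xˢ` lies outside `M` iff `sᵢ < bᵢ` for all `i`.
If `xˢ¹, xˢ² ∉ M` differ, say `s₁ⱼ < s₂ⱼ`, then `xⱼ^{bⱼ - s₂ⱼ}` lies in `M : xˢ²` but not in
`M : xˢ¹`.

For the second part, `M = mono I ⊆ I`. If some `g ∈ I` were not in `M`, pick a support monomial
`xᵐ ∉ M` of `g` with `m` minimal among such exponents. Multiplying `g` by `x^{b - 1 - m}` sends
`xᵐ` to the socle monomial `x^{b - 1} ∉ M` and every other term into `M`, so `x^{b - 1} ∈ I`,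
hence `x^{b - 1} ∈ mono I = M`, a contradiction.
-/

namespace MvPolynomial

variable {σ R : Type*} {b : σ → ℕ}

local notation "𝔪[" b "]" => Ideal.span (Set.range fun i => X i ^ b i)

section CommSemiring

variable [CommSemiring R]

theorem mem_span_X_pow_iff {f : MvPolynomial σ R} :
    f ∈ 𝔪[b] ↔ ∀ m ∈ f.support, ∃ i, b i ≤ m i := by
  have : (Set.range fun i => (X i : MvPolynomial σ R) ^ b i) =
      (fun s => monomial s (1 : R)) '' Set.range fun i => Finsupp.single i (b i) := by
    simp only [← Set.range_comp, Function.comp_def, X_pow_eq_monomial]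
  simp [this, mem_ideal_span_monomial_image, Finsupp.single_le_iff]

theorem monomial_mem_span_X_pow {s : σ →₀ ℕ} (c : R) (h : ∃ i, b i ≤ s i) :
    monomial s c ∈ 𝔪[b] :=
  mem_span_X_pow_iff.2 fun m hm => by rwa [Finset.mem_singleton.1 (support_monomial_subset hm)]

variable [Nontrivial R]

theorem monomial_one_mem_span_X_pow_iff {s : σ →₀ ℕ} :
    monomial s (1 : R) ∈ 𝔪[b] ↔ ∃ i, b i ≤ s i := by
  classical
  simp [mem_span_X_pow_iff, support_monomial]

theorem monomial_one_mem_colon_span_X_pow_iff {s t : σ →₀ ℕ} :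
    monomial t (1 : R) ∈
        (𝔪[b]).colon (Ideal.span {monomial s (1 : R)} : Set (MvPolynomial σ R)) ↔
      ∃ i, b i ≤ t i + s i := by
  rw [Ideal.mem_colon_span_singleton, monomial_mul, one_mul, monomial_one_mem_span_X_pow_iff]
  rfl

theorem X_pow_mem_colon_and_notMem_colon {s₁ s₂ : σ →₀ ℕ} (h₁ : ∀ i, s₁ i < b i) {j : σ}
    (hj : s₁ j < s₂ j) (h₂ : s₂ j < b j) :
    X j ^ (b j - s₂ j) ∈
        (𝔪[b]).colon (Ideal.span {monomial s₂ (1 : R)} : Set (MvPolynomial σ R)) ∧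
      X j ^ (b j - s₂ j) ∉
        (𝔪[b]).colon (Ideal.span {monomial s₁ (1 : R)} : Set (MvPolynomial σ R)) := by
  classical
  rw [X_pow_eq_monomial, monomial_one_mem_colon_span_X_pow_iff,
    monomial_one_mem_colon_span_X_pow_iff]
  refine ⟨⟨j, by simp only [Finsupp.single_eq_same]; omega⟩, fun ⟨i, hi⟩ => ?_⟩
  rw [Finsupp.single_apply] at hi
  have := h₁ i
  split_ifs at hi with hij
  · subst hij; omega
  · omega

theorem eq_of_colon_span_X_pow_eq {s₁ s₂ : σ →₀ ℕ}
    (h₁ : monomial s₁ (1 : R) ∉ 𝔪[b]) (h₂ : monomial s₂ (1 : R) ∉ 𝔪[b])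
    (h : (𝔪[b]).colon (Ideal.span {monomial s₁ (1 : R)} : Set (MvPolynomial σ R)) =
      (𝔪[b]).colon (Ideal.span {monomial s₂ (1 : R)} : Set (MvPolynomial σ R))) :
    s₁ = s₂ := by
  simp only [monomial_one_mem_span_X_pow_iff, not_exists, not_le] at h₁ h₂
  by_contra hne
  obtain ⟨j, hj⟩ := Finsupp.ne_iff.1 hne
  rcases hj.lt_or_gt with hlt | hlt
  · have key := X_pow_mem_colon_and_notMem_colon (R := R) h₁ hlt (h₂ j)
    exact key.2 (h ▸ key.1)
  · have key := X_pow_mem_colon_and_notMem_colon (R := R) h₂ hlt (h₁ j)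
    exact key.2 (h.symm ▸ key.1)

end CommSemiring

theorem monomial_mul_sub_monomial_mem_span_X_pow [CommRing R] {g : MvPolynomial σ R}
    {d m : σ →₀ ℕ} (hm : m ∈ g.support)
    (h : ∀ m' ∈ g.support, m' ≠ m → ∃ i, b i ≤ d i + m' i) :
    monomial d 1 * g - monomial (d + m) (coeff m g) ∈ 𝔪[b] := by
  classical
  have hsum : monomial d 1 * g =
      ∑ m' ∈ g.support, monomial (d + m') (coeff m' g) := by
    conv_lhs => rw [g.as_sum]
    simp only [Finset.mul_sum, monomial_mul, one_mul]
  rw [hsum, ← Finset.add_sum_erase _ _ hm, add_sub_cancel_left]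
  exact Ideal.sum_mem _ fun m' hm' =>
    monomial_mem_span_X_pow _ (h m' (Finset.mem_of_mem_erase hm') (Finset.ne_of_mem_erase hm'))

theorem exists_monomial_mem_notMem_span_X_pow [Finite σ] {k : Type*} [Field k]
    {I : Ideal (MvPolynomial σ k)} (hMI : 𝔪[b] ≤ I) {g : MvPolynomial σ k} (hgI : g ∈ I)
    (hgM : g ∉ 𝔪[b]) : ∃ s, monomial s (1 : k) ∈ I ∧ monomial s (1 : k) ∉ 𝔪[b] := by
  obtain ⟨m, hm⟩ : ∃ m, Minimal (fun m => m ∈ g.support ∧ ∀ i, m i < b i) m :=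
    exists_minimal_of_wellFoundedLT _ (by simpa [mem_span_X_pow_iff] using hgM)
  let d : σ →₀ ℕ := Finsupp.equivFunOnFinite.symm fun i => b i - 1 - m i
  have hd : ∀ i, d i = b i - 1 - m i := fun i => rfl
  have hkill : ∀ m' ∈ g.support, m' ≠ m → ∃ i, b i ≤ d i + m' i := by
    intro m' hm' hne
    by_cases hstd : ∀ i, m' i < b i
    · have hnle : ¬ m' ≤ m := fun hle => hne (le_antisymm hle (hm.2 ⟨hm', hstd⟩ hle))
      obtain ⟨i, hi⟩ : ∃ i, m i < m' i := by simpa [Finsupp.le_def] using hnle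
      exact ⟨i, by rw [hd]; have := hm.1.2 i; omega⟩
    · obtain ⟨i, hi⟩ := not_forall.1 hstd
      exact ⟨i, by omega⟩
  refine ⟨d + m, ?_, ?_⟩
  · have hc : coeff m g ≠ 0 := mem_support_iff.1 hm.1.1
    have hmul : monomial (d + m) (coeff m g) ∈ I := by
      simpa using I.sub_mem (I.mul_mem_left (monomial d 1) hgI)
        (hMI (monomial_mul_sub_monomial_mem_span_X_pow hm.1.1 hkill))
    simpa [C_mul_monomial, hc] using I.mul_mem_left (C (coeff m g)⁻¹) hmul
  · rw [monomial_one_mem_span_X_pow_iff]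
    rintro ⟨i, hi⟩
    have := hm.1.2 i
    rw [Finsupp.add_apply, hd] at hi
    omega

end MvPolynomial

theorem mono_gorenstein {k : Type*} [Field k] {n : ℕ} (b : Fin n → ℕ)
    (M : Ideal (MvPolynomial (Fin n) k))
    (hMdef : M = Ideal.span (Set.range fun i : Fin n => MvPolynomial.X i ^ b i)) :
    (¬ ∃ u₁ u₂ : MvPolynomial (Fin n) k, IsMonomial u₁ ∧ IsMonomial u₂ ∧ u₁ ≠ u₂ ∧
        u₁ ∉ M ∧ u₂ ∉ M ∧
        Submodule.colon M (Ideal.span {u₁}) = Submodule.colon M (Ideal.span {u₂})) ∧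
      (∀ I : Ideal (MvPolynomial (Fin n) k), IsHomogeneousIdeal I →
        (∃ s : ℕ, (maxIdeal k n) ^ s ≤ I) → mono I = M → I = M) := by
  subst hMdef
  refine ⟨?_, fun I _ _ hmono => ?_⟩
  · rintro ⟨_, _, ⟨s₁, rfl⟩, ⟨s₂, rfl⟩, hne, h₁, h₂, hcol⟩
    exact hne (by rw [eq_of_colon_span_X_pow_eq h₁ h₂ hcol])
  · have hMI : Ideal.span (Set.range fun i => X i ^ b i) ≤ I :=
      hmono ▸ Ideal.span_le.2 fun _ hf => hf.2
    refine le_antisymm (fun g hgI => by_contra fun hgM => ?_) hMI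
    obtain ⟨s, hsI, hsM⟩ := exists_monomial_mem_notMem_span_X_pow hMI hgI hgM
    exact hsM (hmono ▸ Ideal.subset_span ⟨⟨s, rfl⟩, hsI⟩)
end

section
/- Let M be an Artinian monomial ideal whose socle has k-dimension at least 2, witnessed by two distinct monomials u₁ ≠ u₂ in (M : m) \ M. Then I := M + (u₁ + u₂) is a non-monomial ideal with mono(I) = M. -/
/-!
A socle monomial `u` satisfies `m u ⊆ M`, so modulo `M` every multiple `g (u₁ + u₂)` reduces to
the scalar multiple `g(0) (u₁ + u₂)`. A monomial `x^t` of `M + (u₁ + u₂)` thus gives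
`x^t - c (u₁ + u₂) ∈ M`; since `M` is monomial and `u₁, u₂ ∉ M`, the coefficients of this
polynomial at `u₁` and `u₂` vanish, forcing `c = 0` because `u₁ ≠ u₂`. Hence `mono(I) = M`, and
`I ≠ M` because `u₁ + u₂ ∉ M`.
-/

open MvPolynomial

section

variable {k : Type*} [Field k] {n : ℕ}

lemma mono_mono {I J : Ideal (MvPolynomial (Fin n) k)} (h : I ≤ J) : mono I ≤ mono J :=
  Ideal.span_mono fun _ ⟨hf, hfI⟩ => ⟨hf, h hfI⟩

lemma IsMonomialIdeal.eq_span_monomial {M : Ideal (MvPolynomial (Fin n) k)}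
    (hM : IsMonomialIdeal M) :
    M = Ideal.span ((fun s => monomial s (1 : k)) '' {s | monomial s (1 : k) ∈ M}) := by
  conv_lhs => rw [← hM]
  refine congrArg Ideal.span (Set.ext fun f => ?_)
  constructor
  · rintro ⟨⟨s, rfl⟩, hf⟩
    exact ⟨s, hf, rfl⟩
  · rintro ⟨s, hs, rfl⟩
    exact ⟨⟨s, rfl⟩, hs⟩

lemma IsMonomialIdeal.monomial_mem_of_mem_support {M : Ideal (MvPolynomial (Fin n) k)}
    (hM : IsMonomialIdeal M) {p : MvPolynomial (Fin n) k} (hp : p ∈ M) {t : Fin n →₀ ℕ}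
    (ht : t ∈ p.support) : monomial t (1 : k) ∈ M := by
  rw [hM.eq_span_monomial] at hp
  obtain ⟨s, hs, hst⟩ := mem_ideal_span_monomial_image.mp hp t ht
  have hdvd : monomial t (1 : k) = monomial (t - s) 1 * monomial s 1 := by
    rw [monomial_mul, one_mul, tsub_add_cancel_of_le hst]
  exact hdvd ▸ M.mul_mem_left _ hs

lemma IsMonomialIdeal.coeff_eq_zero_of_mem {M : Ideal (MvPolynomial (Fin n) k)}
    (hM : IsMonomialIdeal M) {p : MvPolynomial (Fin n) k} (hp : p ∈ M) {t : Fin n →₀ ℕ}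
    (ht : monomial t (1 : k) ∉ M) : coeff t p = 0 :=
  notMem_support_iff.mp fun h => ht (hM.monomial_mem_of_mem_support hp h)

lemma sub_C_constantCoeff_mem_maxIdeal (g : MvPolynomial (Fin n) k) :
    g - C (constantCoeff g) ∈ maxIdeal k n := by
  rw [maxIdeal, ← Set.image_univ]
  refine mem_ideal_span_X_image.mpr fun m hm => ?_
  have hm0 : m ≠ 0 := by
    rintro rfl
    exact mem_support_iff.mp hm (by simp [constantCoeff_eq])
  obtain ⟨i, hi⟩ := Finsupp.ne_iff.mp hm0
  exact ⟨i, trivial, by simpa using hi⟩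

lemma exists_sub_C_mul_mem_of_mem_sup_span {M : Ideal (MvPolynomial (Fin n) k)}
    {u f : MvPolynomial (Fin n) k} (hu : u ∈ M.colon (maxIdeal k n))
    (hf : f ∈ M ⊔ Ideal.span {u}) : ∃ c : k, f - C c * u ∈ M := by
  obtain ⟨y, hy, z, hz, rfl⟩ := Submodule.mem_sup.mp hf
  obtain ⟨g, rfl⟩ := Ideal.mem_span_singleton'.mp hz
  refine ⟨constantCoeff g, ?_⟩
  have hgu : u * (g - C (constantCoeff g)) ∈ M :=
    Submodule.mem_colon.mp hu _ (sub_C_constantCoeff_mem_maxIdeal g)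
  convert M.add_mem hy hgu using 1
  ring

lemma IsMonomialIdeal.monomial_mem_of_mem_sup_span_add {M : Ideal (MvPolynomial (Fin n) k)}
    (hM : IsMonomialIdeal M) {s₁ s₂ t : Fin n →₀ ℕ} (hne : s₁ ≠ s₂)
    (hu₁ : monomial s₁ (1 : k) ∉ M) (hu₂ : monomial s₂ (1 : k) ∉ M)
    (hs₁ : monomial s₁ (1 : k) ∈ M.colon (maxIdeal k n))
    (hs₂ : monomial s₂ (1 : k) ∈ M.colon (maxIdeal k n))
    (ht : monomial t (1 : k) ∈ M ⊔ Ideal.span {monomial s₁ 1 + monomial s₂ 1}) :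
    monomial t (1 : k) ∈ M := by
  obtain ⟨c, hc⟩ := exists_sub_C_mul_mem_of_mem_sup_span (Submodule.add_mem _ hs₁ hs₂) ht
  have hc₁ := hM.coeff_eq_zero_of_mem hc hu₁
  have hc₂ := hM.coeff_eq_zero_of_mem hc hu₂
  simp only [coeff_sub, coeff_C_mul, coeff_add, coeff_monomial, if_neg hne, if_neg hne.symm,
    if_true, add_zero, zero_add, mul_one] at hc₁ hc₂
  -- `c` equals both `[t = s₁]` and `[t = s₂]`, which cannot both be `1`
  have hc0 : c = 0 := by
    split_ifs at hc₁ hc₂ with h₁ h₂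
    · exact absurd (h₁.symm.trans h₂) hne
    · linear_combination -hc₂
    all_goals linear_combination -hc₁
  simpa [hc0] using hc

end

theorem socle_binomial_mono_general {k : Type*} [Field k] {n : ℕ}
    (M : Ideal (MvPolynomial (Fin n) k)) (hM : IsMonomialIdeal M)
    (u₁ u₂ : MvPolynomial (Fin n) k) (h₁ : IsMonomial u₁) (h₂ : IsMonomial u₂)
    (hne : u₁ ≠ u₂) (hu₁ : u₁ ∉ M) (hu₂ : u₂ ∉ M)
    (hs₁ : u₁ ∈ Submodule.colon M (maxIdeal k n))
    (hs₂ : u₂ ∈ Submodule.colon M (maxIdeal k n)) :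
    mono (M + Ideal.span {u₁ + u₂}) = M ∧ ¬ IsMonomialIdeal (M + Ideal.span {u₁ + u₂}) := by
  obtain ⟨s₁, rfl⟩ := h₁
  obtain ⟨s₂, rfl⟩ := h₂
  have hs : s₁ ≠ s₂ := fun h => hne (h ▸ rfl)
  rw [Submodule.add_eq_sup]
  have hmono : mono (M ⊔ Ideal.span {monomial s₁ 1 + monomial s₂ 1}) = M := by
    refine le_antisymm (Ideal.span_le.mpr ?_) (hM.ge.trans (mono_mono le_sup_left))
    rintro _ ⟨⟨t, rfl⟩, ht⟩
    exact hM.monomial_mem_of_mem_sup_span_add hs hu₁ hu₂ hs₁ hs₂ ht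
  refine ⟨hmono, fun hI => ?_⟩
  have hsum : monomial s₁ 1 + monomial s₂ (1 : k) ∈ M :=
    hI.symm.trans hmono ▸ Ideal.mem_sup_right (Ideal.mem_span_singleton_self _)
  simpa [coeff_monomial, hs.symm] using hM.coeff_eq_zero_of_mem hsum hu₁

theorem socle_binomial_mono {k : Type*} [Field k] {n : ℕ}
    (M : Ideal (MvPolynomial (Fin n) k)) (hM : IsMonomialIdeal M)
    (hart : ∃ s : ℕ, (maxIdeal k n) ^ s ≤ M)
    (u₁ u₂ : MvPolynomial (Fin n) k) (h₁ : IsMonomial u₁) (h₂ : IsMonomial u₂)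
    (hne : u₁ ≠ u₂) (hu₁ : u₁ ∉ M) (hu₂ : u₂ ∉ M)
    (hs₁ : u₁ ∈ Submodule.colon M (maxIdeal k n))
    (hs₂ : u₂ ∈ Submodule.colon M (maxIdeal k n)) :
    mono (M + Ideal.span {u₁ + u₂}) = M ∧ ¬ IsMonomialIdeal (M + Ideal.span {u₁ + u₂}) :=
  socle_binomial_mono_general M hM u₁ u₂ h₁ h₂ hne hu₁ hu₂ hs₁ hs₂
end
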